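/- arXiv:2201.11974 — 2 statements merged into one kernel-verified Lean document; each statement's English description precedes it below -/
import Mathlib

section
/- The unique double bialgebra morphism from the double bialgebra of graphs (H_G, m, Δ, δ) to (K[X], m, Δ, δ) sends each graph G to its chromatic polynomial, i.e. the polynomial whose value at n ∈ ℕ is the number of proper n-colorings of G. -/
open TensorProduct

section Graphs

/-- the setoid of graph isomorphism on graphs with vertex set some `Fin n` -/
def graphSetoid : Setoid (Σ n : ℕ, SimpleGraph (Fin n)) where
  r G H := Nonempty (G.2 ≃g H.2)
  iseqv := ⟨fun _ => ⟨RelIso.refl _⟩,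
    fun ⟨e⟩ => ⟨e.symm⟩, fun ⟨e⟩ ⟨f⟩ => ⟨e.trans f⟩⟩

/-- isomorphism classes of finite simple graphs -/
def GraphCls : Type := Quotient graphSetoid

/-- the isomorphism class of a graph on a finite vertex set -/
noncomputable def cls {V : Type} [Finite V] (G : SimpleGraph V) : GraphCls :=
  letI := Fintype.ofFinite V
  letI := Classical.decEq V
  Quotient.mk graphSetoid
    ⟨Fintype.card V, SimpleGraph.comap (⇑(Fintype.equivFin V).symm) G⟩

/-- disjoint union of two graphs -/
def dUnion {α β : Type} (G : SimpleGraph α) (H : SimpleGraph β) :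
    SimpleGraph (α ⊕ β) where
  Adj x y := match x, y with
    | .inl a, .inl b => G.Adj a b
    | .inr a, .inr b => H.Adj a b
    | _, _ => False
  symm := ⟨by rintro (a | a) (b | b) h <;> simp_all <;> exact h.symm⟩
  loopless := ⟨by rintro (a | a) h <;> simp_all⟩

/-- the contracted graph `G/∼` -/
def contractG {V : Type} (G : SimpleGraph V) (s : Setoid V) :
    SimpleGraph (Quotient s) where
  Adj a b := a ≠ b ∧ ∃ x y : V, Quotient.mk s x = a ∧ Quotient.mk s y = b ∧ G.Adj x y
  symm := ⟨by
    rintro a b ⟨hab, x, y, hx, hy, h⟩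
    exact ⟨hab.symm, y, x, hy, hx, h.symm⟩⟩
  loopless := ⟨by rintro a ⟨h, -⟩; exact h rfl⟩

/-- the restricted graph `G|∼`: only the edges inside the classes of `∼` are kept -/
def restrictG {V : Type} (G : SimpleGraph V) (s : Setoid V) : SimpleGraph V where
  Adj a b := G.Adj a b ∧ s.r a b
  symm := ⟨by rintro a b ⟨h1, h2⟩; exact ⟨h1.symm, s.symm' h2⟩⟩
  loopless := ⟨by rintro a ⟨h, -⟩; exact G.loopless.irrefl a h⟩

/-- `∼` belongs to `E_c(G)`: every equivalence class of `∼` induces a connected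
subgraph of `G` -/
def ConnClasses {V : Type} (G : SimpleGraph V) (s : Setoid V) : Prop :=
  ∀ x : V, (G.induce {y : V | s.r x y}).Connected

end Graphs

section PolyBialgebra

variable (K : Type) [Field K]

/-- the coproduct `Δ` on `K[X]`, the algebra map sending `X` to `X ⊗ 1 + 1 ⊗ X` -/
noncomputable def polyComul : Polynomial K →ₗ[K] Polynomial K ⊗[K] Polynomial K :=
  (Polynomial.aeval ((Polynomial.X : Polynomial K) ⊗ₜ[K] 1
    + 1 ⊗ₜ[K] (Polynomial.X : Polynomial K))).toLinearMap

/-- the second coproduct `δ` on `K[X]`, the algebra map sending `X` to `X ⊗ X` -/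
noncomputable def polyDelta : Polynomial K →ₗ[K] Polynomial K ⊗[K] Polynomial K :=
  (Polynomial.aeval ((Polynomial.X : Polynomial K) ⊗ₜ[K]
    (Polynomial.X : Polynomial K))).toLinearMap

/-- evaluation of polynomials at `a ∈ K`, as a linear form on `K[X]` -/
noncomputable def evalAt (a : K) : Polynomial K →ₗ[K] K :=
  (Polynomial.aeval a).toLinearMap

end PolyBialgebra

/-! Evaluation at `a + b` factors through the coproduct `Δ` of `K[X]`, so a morphism compatible
with `Δ` satisfies `Φ(G)(q + 1) = ∑_I Φ(G|_I)(q) · Φ(G|_{V∖I})(1)`. Compatibility with the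
counits gives `Φ(G)(0) = [V = ∅]` and `Φ(G)(1) = [G has no edges]`. Proper colorings obey the same
rules: a coloring with one extra color is a coloring of the set `I` of vertices avoiding that
color, together with the fact that its complement is independent, i.e. has a (unique) proper
`1`-coloring. Induction on `q` concludes. -/

namespace SimpleGraph

variable {V W α β : Type} {G : SimpleGraph V} {H : SimpleGraph W}

def coloringEquivSubtype : G.Coloring α ≃ {f : V → α // ∀ a b, G.Adj a b → f a ≠ f b} where
  toFun c := ⟨c, fun _ _ => c.valid⟩
  invFun f := Coloring.mk f.1 (f.2 _ _)
  left_inv _ := rfl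
  right_inv _ := rfl

lemma Iso.card_coloring_eq (e : G ≃g H) (f : α ≃ β) :
    Nat.card (G.Coloring α) = Nat.card (H.Coloring β) :=
  Nat.card_congr (e.homCongr (Iso.completeGraph f))

open scoped Classical in
lemma card_coloring_of_isEmpty [IsEmpty α] :
    Nat.card (G.Coloring α) = if IsEmpty V then 1 else 0 := by
  split_ifs with hV
  · have : Unique (G.Coloring α) :=
      ⟨⟨Coloring.mk isEmptyElim fun {v} => isEmptyElim v⟩, fun c => RelHom.ext isEmptyElim⟩
    exact Nat.card_unique
  · obtain ⟨v⟩ := not_isEmpty_iff.mp hV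
    have : IsEmpty (G.Coloring α) := ⟨fun c => isEmptyElim (c v)⟩
    exact Nat.card_of_isEmpty

open scoped Classical in
lemma card_coloring_of_unique [Unique α] :
    Nat.card (G.Coloring α) = if G = ⊥ then 1 else 0 := by
  split_ifs with hG
  · have : Unique (G.Coloring α) :=
      ⟨⟨Coloring.mk default fun h => by simp [hG] at h⟩,
        fun c => RelHom.ext fun _ => Unique.eq_default _⟩
    exact Nat.card_unique
  · obtain ⟨a, b, hab⟩ : ∃ a b, G.Adj a b := by
      by_contra! h
      exact hG (eq_bot_iff_forall_not_adj.mpr h)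
    have : IsEmpty (G.Coloring α) := ⟨fun c => c.valid hab (Subsingleton.elim _ _)⟩
    exact Nat.card_of_isEmpty

section OptionColoring

variable [Fintype V] [DecidableEq V]

def coloringOptionFiberEquiv (I : Finset V) :
    {c : G.Coloring (Option α) // {v | (c v).isSome} = I} ≃
      (G.induce I).Coloring α × (G.induce ↑Iᶜ).Coloring Unit where
  toFun c :=
    have hI (v : V) : v ∈ I ↔ (c.1 v).isSome := (Set.ext_iff.mp c.2 v).symm
    (Coloring.mk (fun v => (c.1 v).get ((hI v).1 v.2)) fun h heq =>
        c.1.valid h (Option.get_inj.mp heq),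
      Coloring.mk (fun _ => ()) fun {v w} h _ => c.1.valid h <| by
        have hv := v.2
        have hw := w.2
        simp only [Finset.coe_compl, Set.mem_compl_iff, Finset.mem_coe, hI,
          Option.not_isSome_iff_eq_none] at hv hw
        simp [hv, hw])
  invFun c :=
    ⟨Coloring.mk (fun v => if h : v ∈ I then some (c.1 ⟨v, h⟩) else none) fun {v w} h => by
        by_cases hv : v ∈ I <;> by_cases hw : w ∈ I <;> simp only [hv, hw, dite_true, dite_false]
        · exact fun heq => c.1.valid (v := ⟨v, hv⟩) (w := ⟨w, hw⟩) (by simpa using h)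
            (Option.some_inj.mp heq)
        · simp
        · simp
        · exact fun _ => c.2.valid (v := ⟨v, by simpa⟩) (w := ⟨w, by simpa⟩) (by simpa using h) rfl,
      by ext v; by_cases hv : v ∈ I <;> simp [Coloring.mk, hv]⟩
  left_inv c := by
    have hI (v : V) : v ∈ I ↔ (c.1 v).isSome := (Set.ext_iff.mp c.2 v).symm
    refine Subtype.ext (RelHom.ext fun v => ?_)
    by_cases hv : v ∈ I
    · exact (dif_pos hv).trans (Option.some_get _)
    · exact (dif_neg hv).trans (Option.not_isSome_iff_eq_none.mp (mt (hI v).2 hv)).symm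
  right_inv c := Prod.ext (RelHom.ext fun v => by simp [Coloring.mk]) (Subsingleton.elim _ _)

lemma card_coloring_option [Finite α] :
    Nat.card (G.Coloring (Option α)) = ∑ I : Finset V,
      Nat.card ((G.induce I).Coloring α) * Nat.card ((G.induce ↑Iᶜ).Coloring Unit) := by
  let support (c : G.Coloring (Option α)) : Finset V := {v | (c v).isSome}
  rw [← Nat.card_congr (Equiv.sigmaFiberEquiv support), Nat.card_sigma]
  refine Finset.sum_congr rfl fun I _ => ?_
  rw [← Nat.card_prod, ← Nat.card_congr (coloringOptionFiberEquiv (G := G) I)]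
  simp [support, Finset.ext_iff, Set.ext_iff]

end OptionColoring

end SimpleGraph

lemma evalAt_apply (K : Type) [Field K] (a : K) (p : Polynomial K) : evalAt K a p = p.eval a :=
  Polynomial.coe_aeval_eq_eval a ▸ rfl

lemma evalAt_add (K : Type) [Field K] (a b : K) :
    evalAt K (a + b) =
      LinearMap.mul' K K ∘ₗ TensorProduct.map (evalAt K a) (evalAt K b) ∘ₗ polyComul K := by
  have h : Polynomial.aeval (a + b) = (Algebra.TensorProduct.lmul' K).comp
      ((Algebra.TensorProduct.map (Polynomial.aeval a) (Polynomial.aeval b)).comp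
        (Polynomial.aeval ((Polynomial.X : Polynomial K) ⊗ₜ[K] 1 + 1 ⊗ₜ[K] Polynomial.X))) :=
    Polynomial.algHom_ext (by simp)
  rw [evalAt, h, ← Algebra.TensorProduct.lmul'_toLinearMap]
  rfl

lemma cls_eq_of_iso {V W : Type} [Finite V] [Finite W] {G : SimpleGraph V} {H : SimpleGraph W}
    (e : G ≃g H) : cls G = cls H := by
  let := Fintype.ofFinite V
  let := Fintype.ofFinite W
  exact Quotient.sound ⟨((SimpleGraph.Iso.comap _ G).trans e).trans
    (SimpleGraph.Iso.comap _ H).symm⟩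

lemma apply_cls_eq_card_coloring {R α : Type} [NatCast R] {F : GraphCls → R}
    (h : ∀ n (G : SimpleGraph (Fin n)), F (cls G) = Nat.card (G.Coloring α))
    {V : Type} [Finite V] (H : SimpleGraph V) : F (cls H) = Nat.card (H.Coloring α) := by
  let e : H.comap (Finite.equivFin V).symm ≃g H := SimpleGraph.Iso.comap _ H
  rw [← cls_eq_of_iso e, h, e.card_coloring_eq (Equiv.refl α)]

theorem eval_natCast_eq_card_coloring {K : Type} [CommSemiring K] {P : GraphCls → Polynomial K}
    (h0 : ∀ n (G : SimpleGraph (Fin n)), (P (cls G)).eval 0 = Nat.card (G.Coloring (Fin 0)))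
    (h1 : ∀ n (G : SimpleGraph (Fin n)), (P (cls G)).eval 1 = Nat.card (G.Coloring Unit))
    (hadd : ∀ n (G : SimpleGraph (Fin n)) (a b : K), (P (cls G)).eval (a + b) =
      ∑ I : Finset (Fin n), (P (cls (G.induce I))).eval a * (P (cls (G.induce ↑Iᶜ))).eval b)
    (q n : ℕ) (G : SimpleGraph (Fin n)) :
    (P (cls G)).eval (q : K) = Nat.card (G.Coloring (Fin q)) := by
  induction q generalizing n G with
  | zero => simpa using h0 n G
  | succ q ih =>
    rw [Nat.cast_succ, hadd, (SimpleGraph.Iso.refl).card_coloring_eq finSuccEquivLast,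
      SimpleGraph.card_coloring_option]
    push_cast
    refine Finset.sum_congr rfl fun I _ => ?_
    rw [apply_cls_eq_card_coloring (F := fun x => (P x).eval (q : K)) ih,
      apply_cls_eq_card_coloring (F := fun x => (P x).eval 1) h1]

open scoped Classical in
theorem graph_double_morphism_is_chromatic_general (K : Type) [Field K]
    (comulH : (GraphCls →₀ K) →ₗ[K] (GraphCls →₀ K) ⊗[K] (GraphCls →₀ K))
    (counitH epsdeltaH : (GraphCls →₀ K) →ₗ[K] K)
    -- the coproduct Δ, given by partitions of the vertex set into two subsets
    (hcomul : ∀ (n : ℕ) (G : SimpleGraph (Fin n)),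
      comulH (Finsupp.single (cls G) 1)
        = ∑ I : Finset (Fin n),
            Finsupp.single (cls (G.induce (I : Set (Fin n)))) (1 : K)
              ⊗ₜ[K] Finsupp.single (cls (G.induce ((↑(Iᶜ) : Set (Fin n))))) 1)
    -- the counit of Δ
    (hcounit : ∀ (n : ℕ) (G : SimpleGraph (Fin n)),
      counitH (Finsupp.single (cls G) 1) = if n = 0 then 1 else 0)
    -- the counit of δ
    (hepsdelta : ∀ (n : ℕ) (G : SimpleGraph (Fin n)),
      epsdeltaH (Finsupp.single (cls G) 1) = if G = ⊥ then 1 else 0)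
    -- Φ is a double bialgebra morphism from H_G to K[X]
    (Φ : (GraphCls →₀ K) →ₗ[K] Polynomial K)
    (hΦcomul : polyComul K ∘ₗ Φ = TensorProduct.map Φ Φ ∘ₗ comulH)
    (hΦcounit : evalAt K 0 ∘ₗ Φ = counitH)
    (hΦepsdelta : evalAt K 1 ∘ₗ Φ = epsdeltaH) :
    ∀ (n : ℕ) (G : SimpleGraph (Fin n)) (q : ℕ),
      Polynomial.eval (q : K) (Φ (Finsupp.single (cls G) 1))
        = Nat.card {f : Fin n → Fin q // ∀ a b, G.Adj a b → f a ≠ f b} := by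
  intro n G q
  rw [← Nat.card_congr SimpleGraph.coloringEquivSubtype]
  refine eval_natCast_eq_card_coloring (P := fun x => Φ (Finsupp.single x 1)) ?_ ?_ ?_ q n G
  · intro n G
    rw [← evalAt_apply, ← LinearMap.comp_apply, hΦcounit, hcounit,
      SimpleGraph.card_coloring_of_isEmpty, ← Fintype.card_eq_zero_iff, Fintype.card_fin]
    split_ifs <;> simp
  · intro n G
    rw [← evalAt_apply, ← LinearMap.comp_apply, hΦepsdelta, hepsdelta,
      SimpleGraph.card_coloring_of_unique]
    split_ifs <;> simp
  · intro n G a b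
    have hΔ : polyComul K (Φ (Finsupp.single (cls G) 1))
        = TensorProduct.map Φ Φ (comulH (Finsupp.single (cls G) 1)) :=
      LinearMap.congr_fun hΦcomul _
    rw [← evalAt_apply, evalAt_add]
    simp [hΔ, hcomul, evalAt_apply]

open scoped Classical in
/-- Let `H_G = ⊕_{G graph} K·[G]` be the double bialgebra of graphs: the product is
induced by disjoint union, `Δ(G) = Σ_{I ⊆ V(G)} G|_I ⊗ G|_{V(G)∖I}` and
`δ(G) = Σ_{∼ ∈ E_c(G)} G/∼ ⊗ G|∼`.  Then every double bialgebra morphism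
`Φ : H_G → K[X]` sends each graph `G` to its chromatic polynomial: for all `q ∈ ℕ`,
`Φ(G)(q)` is the number of proper `q`-colorings of `G`. -/
theorem graph_double_morphism_is_chromatic (K : Type) [Field K] [CharZero K]
    (mulH : (GraphCls →₀ K) →ₗ[K] (GraphCls →₀ K) →ₗ[K] (GraphCls →₀ K))
    (comulH deltaH : (GraphCls →₀ K) →ₗ[K] (GraphCls →₀ K) ⊗[K] (GraphCls →₀ K))
    (counitH epsdeltaH : (GraphCls →₀ K) →ₗ[K] K)
    -- the product is the disjoint union of graphs
    (hmul : ∀ (n m : ℕ) (G : SimpleGraph (Fin n)) (H : SimpleGraph (Fin m)),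
      mulH (Finsupp.single (cls G) 1) (Finsupp.single (cls H) 1)
        = Finsupp.single (cls (dUnion G H)) 1)
    -- the coproduct Δ, given by partitions of the vertex set into two subsets
    (hcomul : ∀ (n : ℕ) (G : SimpleGraph (Fin n)),
      comulH (Finsupp.single (cls G) 1)
        = ∑ I : Finset (Fin n),
            Finsupp.single (cls (G.induce (I : Set (Fin n)))) (1 : K)
              ⊗ₜ[K] Finsupp.single (cls (G.induce ((↑(Iᶜ) : Set (Fin n))))) 1)
    -- the counit of Δ
    (hcounit : ∀ (n : ℕ) (G : SimpleGraph (Fin n)),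
      counitH (Finsupp.single (cls G) 1) = if n = 0 then 1 else 0)
    -- the coproduct δ, given by contractions along equivalences with connected classes
    (hdelta : ∀ (n : ℕ) (G : SimpleGraph (Fin n)),
      deltaH (Finsupp.single (cls G) 1)
        = ∑ᶠ (s : Setoid (Fin n)) (_ : ConnClasses G s),
            Finsupp.single (cls (contractG G s)) (1 : K)
              ⊗ₜ[K] Finsupp.single (cls (restrictG G s)) 1)
    -- the counit of δ
    (hepsdelta : ∀ (n : ℕ) (G : SimpleGraph (Fin n)),
      epsdeltaH (Finsupp.single (cls G) 1) = if G = ⊥ then 1 else 0)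
    -- Φ is a double bialgebra morphism from H_G to K[X]
    (Φ : (GraphCls →₀ K) →ₗ[K] Polynomial K)
    (hΦone : Φ (Finsupp.single (cls (⊥ : SimpleGraph (Fin 0))) 1) = 1)
    (hΦmul : ∀ x y : GraphCls →₀ K, Φ (mulH x y) = Φ x * Φ y)
    (hΦcomul : polyComul K ∘ₗ Φ = TensorProduct.map Φ Φ ∘ₗ comulH)
    (hΦcounit : evalAt K 0 ∘ₗ Φ = counitH)
    (hΦdelta : polyDelta K ∘ₗ Φ = TensorProduct.map Φ Φ ∘ₗ deltaH)
    (hΦepsdelta : evalAt K 1 ∘ₗ Φ = epsdeltaH) :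
    ∀ (n : ℕ) (G : SimpleGraph (Fin n)) (q : ℕ),
      Polynomial.eval (q : K) (Φ (Finsupp.single (cls G) 1))
        = Nat.card {f : Fin n → Fin q // ∀ a b, G.Adj a b → f a ≠ f b} :=
  graph_double_morphism_is_chromatic_general K comulH counitH epsdeltaH hcomul hcounit hepsdelta Φ
    hΦcomul hΦcounit hΦepsdelta
end

section
/- Let G be a graph, e ∈ E(G), G∖e the deletion and G/e the contraction of e, and let φ̃(H) denote the number of acyclic orientations of H with a unique fixed source. Then φ̃(G) = φ̃(G∖e) + φ̃(G/e). Also, the chromatic polynomial satisfies P(G) = P(G∖e) − P(G/e). -/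
section Orientations

variable {V : Type*}

/-- `r` is an orientation of the simple graph `G`: each edge of `G` receives exactly
one direction, and there are no other arcs. -/
def IsOrientation (G : SimpleGraph V) (r : V → V → Prop) : Prop :=
  (∀ a b : V, r a b → G.Adj a b) ∧ (∀ a b : V, G.Adj a b → (r a b ↔ ¬ r b a))

/-- the oriented graph `r` is acyclic: no directed cycle (no nontrivial directed
walk from a vertex to itself) -/
def IsAcyclicOrientation (G : SimpleGraph V) (r : V → V → Prop) : Prop :=
  IsOrientation G r ∧ ∀ a : V, ¬ Relation.TransGen r a a

/-- `O(G, x)`: the set of acyclic orientations of `G` whose set of sources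
(vertices with no incoming arc) is exactly `{x}` -/
def acyclicOrientationsWithSource (G : SimpleGraph V) (x : V) : Set (V → V → Prop) :=
  {r | IsAcyclicOrientation G r ∧ {a : V | ∀ b : V, ¬ r b a} = {x}}

end Orientations

section DeletionContraction

variable {V : Type*}

/-- the graph `G ∖ e` obtained from `G` by deleting the edge `e = {u, v}` -/
def delEdge (G : SimpleGraph V) (u v : V) : SimpleGraph V :=
  G.deleteEdges {s(u, v)}

/-- the graph `G / e` obtained from `G` by contracting the edge `e = {u, v}`
(the vertex `u` is merged into `v`) -/
def contractEdge (G : SimpleGraph V) (u v : V) : SimpleGraph {x : V // x ≠ u} where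
  Adj a b := a ≠ b ∧
    (G.Adj a.1 b.1 ∨ (a.1 = v ∧ G.Adj u b.1) ∨ (b.1 = v ∧ G.Adj u a.1))
  symm := by
    constructor
    rintro a b ⟨hab, h | ⟨h1, h2⟩ | ⟨h1, h2⟩⟩
    · exact ⟨hab.symm, Or.inl h.symm⟩
    · exact ⟨hab.symm, Or.inr (Or.inr ⟨h1, h2⟩)⟩
    · exact ⟨hab.symm, Or.inr (Or.inl ⟨h1, h2⟩)⟩
  loopless := by constructor; rintro a ⟨h, -⟩; exact h rfl

end DeletionContraction

/-!
Fix `x` and split the orientations `r ∈ O(G, x)` according to the edge `e = uv`. Deleting `e`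
maps onto `O(G ∖ e, x)`, with a section obtained by orienting `e` as `u → v` whenever that
stays in `O(G, x)` and as `v → u` otherwise. An orientation outside the image of this section
has, once `e` is deleted, no directed path between `u` and `v`; hence it descends to an acyclic
orientation of `G / e` whose only source is the image `x̄` of `x`. Conversely, an orientation of
`G / e` lifts to `G ∖ e`, and the direction of `e` is then forced: away from the endpoint that
`x` reaches if it reaches only one, and against the section if it reaches both. Hence
`|O(G, x)| = |O(G ∖ e, x)| + |O(G / e, x̄)|`, and applying this to `G ∖ e` and `G / e`, which
have fewer edges, shows by induction that `|O(G, x)|` does not depend on `x`.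

For the chromatic polynomial, a proper colouring of `G ∖ e` either separates `u` and `v`, and
then colours `G` properly, or gives them the same colour, and then factors through `G / e`.
Two polynomials that agree at every natural number are equal.
-/

open Relation

local notation "𝒪" => acyclicOrientationsWithSource

section Relations

variable {V : Type*} {r : V → V → Prop} {a b t w : V}

def addArc (r : V → V → Prop) (t w : V) : V → V → Prop :=
  fun a b => r a b ∨ (a = t ∧ b = w)

theorem le_addArc : r ≤ addArc r t w := fun _ _ => Or.inl

theorem Relation.ReflTransGen.addArc_cases (h : ReflTransGen (addArc r t w) a b) :
    ReflTransGen r a b ∨ ReflTransGen r a t ∧ ReflTransGen r w b := by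
  induction h with
  | refl => exact .inl .refl
  | tail _ hcd ih =>
    rcases hcd with hcd | ⟨rfl, rfl⟩
    · exact ih.imp (·.tail hcd) (And.imp_right (·.tail hcd))
    · exact .inr ⟨ih.elim id And.left, .refl⟩

theorem Relation.ReflTransGen.of_addArc (h : ReflTransGen (addArc r t w) a b)
    (hw : ReflTransGen r a w) : ReflTransGen r a b :=
  h.addArc_cases.elim id fun h => hw.trans h.2

theorem Relation.ReflTransGen.of_addArc_tail (h : ReflTransGen (addArc r t w) a t) :
    ReflTransGen r a t :=
  h.addArc_cases.elim id And.left

theorem acyclic_addArc (hr : ∀ a, ¬ TransGen r a a) (hwt : ¬ ReflTransGen r w t) :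
    ∀ a, ¬ TransGen (addArc r t w) a a := by
  intro a h
  obtain ⟨c, hac, hca | ⟨rfl, rfl⟩⟩ := TransGen.tail'_iff.mp h
  · rcases hac.addArc_cases with hac | ⟨hat, hwc⟩
    · exact hr a (TransGen.tail' hac hca)
    · exact hwt ((hwc.tail hca).trans hat)
  · exact hwt hac.of_addArc_tail

theorem not_transGen_of_acyclic_addArc (h : ∀ a, ¬ TransGen (addArc r t w) a a) :
    ¬ TransGen r w t :=
  fun hwt => h w ((TransGen.mono le_addArc w t hwt).tail (.inr ⟨rfl, rfl⟩))

theorem sources_eq_singleton_iff [Finite V] (hr : ∀ a, ¬ TransGen r a a) (x : V) :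
    {a | ∀ b, ¬ r b a} = {x} ↔ ∀ b, ReflTransGen r x b := by
  constructor
  · intro h b
    have : IsTrans V (TransGen r) := ⟨fun _ _ _ => TransGen.trans⟩
    have : Std.Irrefl (TransGen r) := ⟨hr⟩
    induction b using (Finite.wellFounded_of_trans_of_irrefl (TransGen r)).induction with
    | _ b ih =>
      by_cases hb : b = x
      · exact hb ▸ .refl
      · have hb' : b ∉ {a | ∀ c, ¬ r c a} := h ▸ hb
        obtain ⟨c, hc⟩ := not_forall_not.mp hb'
        exact (ih c (.single hc)).tail hc
  · intro h
    refine Set.eq_singleton_iff_unique_mem.mpr ⟨fun b hb => hr x (TransGen.tail' (h b) hb), ?_⟩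
    intro a ha
    obtain rfl | ⟨c, -, hc⟩ := (h a).cases_tail
    · rfl
    · exact absurd hc (ha c)

def NoPathJoining (r : V → V → Prop) (e : Sym2 V) : Prop :=
  ∀ p ∈ e, ∀ q ∈ e, ¬ TransGen r p q

theorem noPathJoining_mk (hr : ∀ a, ¬ TransGen r a a) (htw : ¬ TransGen r t w)
    (hwt : ¬ TransGen r w t) : NoPathJoining r s(t, w) := by
  intro p hp q hq
  rcases Sym2.mem_iff.mp hp with rfl | rfl <;> rcases Sym2.mem_iff.mp hq with rfl | rfl <;>
    first | exact hr _ | assumption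

end Relations

section Orientations

variable {V : Type*} {G : SimpleGraph V} {r : V → V → Prop}

theorem IsOrientation.total (h : IsOrientation G r) {a b : V} (hab : G.Adj a b) :
    r a b ∨ r b a :=
  or_iff_not_imp_left.mpr fun hr => (h.2 b a hab.symm).mpr hr

theorem IsOrientation.asymm (h : IsOrientation G r) {a b : V} (hab : r a b) : ¬ r b a :=
  (h.2 a b (h.1 a b hab)).mp hab

theorem IsAcyclicOrientation.of_total (hsub : ∀ a b, r a b → G.Adj a b)
    (htot : ∀ a b, G.Adj a b → r a b ∨ r b a) (hac : ∀ a, ¬ TransGen r a a) :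
    IsAcyclicOrientation G r :=
  ⟨⟨hsub, fun a b hab => ⟨fun h h' => hac a (.head h (.single h')),
    fun h => (htot a b hab).resolve_right h⟩⟩, hac⟩

theorem mem_acyclicOrientationsWithSource_iff [Finite V] {x : V} :
    r ∈ 𝒪 G x ↔ IsAcyclicOrientation G r ∧ ∀ b, ReflTransGen r x b :=
  and_congr_right fun h => sources_eq_singleton_iff h.2 x

theorem acyclicOrientationsWithSource_eq_of_forall_not_adj (hG : ∀ a b, ¬ G.Adj a b) (x y : V) :
    𝒪 G x = 𝒪 G y := by
  suffices ∀ x y, 𝒪 G x ⊆ 𝒪 G y from (this x y).antisymm (this y x)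
  rintro x y r ⟨hor, hsrc⟩
  have hy : y ∈ {a | ∀ b, ¬ r b a} := fun b h => hG b y (hor.1.1 b y h)
  rw [hsrc, Set.mem_singleton_iff] at hy
  exact hy ▸ ⟨hor, hsrc⟩

end Orientations

section Deletion

variable {V : Type*} {G : SimpleGraph V} {u v t w : V} {r o : V → V → Prop}

def delArc (u v : V) (r : V → V → Prop) : V → V → Prop :=
  fun a b => r a b ∧ s(a, b) ≠ s(u, v)

theorem delEdge_adj {a b : V} : (delEdge G u v).Adj a b ↔ G.Adj a b ∧ s(a, b) ≠ s(u, v) := by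
  simp only [delEdge, SimpleGraph.deleteEdges_adj, Set.mem_singleton_iff]

theorem ne_of_sym2_eq (he : G.Adj u v) (hep : s(t, w) = s(u, v)) : t ≠ w :=
  fun h => G.not_isDiag_of_mem_edgeSet (G.mem_edgeSet.mpr he) (hep ▸ Sym2.mk_isDiag_iff.mpr h)

theorem isAcyclicOrientation_delArc (hr : IsAcyclicOrientation G r) :
    IsAcyclicOrientation (delEdge G u v) (delArc u v r) := by
  refine .of_total (fun a b h => delEdge_adj.mpr ⟨hr.1.1 a b h.1, h.2⟩) (fun a b hab => ?_)
    (fun a h => hr.2 a (TransGen.mono (fun _ _ => And.left) a a h))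
  obtain ⟨hab, hne⟩ := delEdge_adj.mp hab
  exact (hr.1.total hab).imp (⟨·, hne⟩) (⟨·, by rwa [Sym2.eq_swap]⟩)

theorem addArc_delArc (hr : IsOrientation G r) (htw : r t w) (hep : s(t, w) = s(u, v)) :
    addArc (delArc u v r) t w = r := by
  ext a b
  constructor
  · rintro (⟨h, -⟩ | ⟨rfl, rfl⟩)
    exacts [h, htw]
  · intro h
    by_cases hab : s(a, b) = s(u, v)
    · rcases Sym2.eq_iff.mp (hab.trans hep.symm) with ⟨rfl, rfl⟩ | ⟨rfl, rfl⟩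
      · exact .inr ⟨rfl, rfl⟩
      · exact absurd htw (hr.asymm h)
    · exact .inl ⟨h, hab⟩

theorem IsOrientation.eq_addArc_or_eq_addArc (hr : IsOrientation G r) (he : G.Adj u v) :
    r = addArc (delArc u v r) u v ∨ r = addArc (delArc u v r) v u :=
  (hr.total he).imp (fun h => (addArc_delArc hr h rfl).symm)
    (fun h => (addArc_delArc hr h Sym2.eq_swap).symm)

theorem delArc_addArc (ho : IsOrientation (delEdge G u v) o) (hep : s(t, w) = s(u, v)) :
    delArc u v (addArc o t w) = o := by
  ext a b
  constructor
  · rintro ⟨h | ⟨rfl, rfl⟩, hab⟩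
    exacts [h, absurd hep hab]
  · exact fun h => ⟨.inl h, (delEdge_adj.mp (ho.1 a b h)).2⟩

theorem isAcyclicOrientation_addArc (he : G.Adj u v)
    (ho : IsAcyclicOrientation (delEdge G u v) o) (hep : s(t, w) = s(u, v))
    (hwt : ¬ ReflTransGen o w t) : IsAcyclicOrientation G (addArc o t w) := by
  refine .of_total ?_ (fun a b hab => ?_) (acyclic_addArc ho.2 hwt)
  · rintro a b (h | ⟨rfl, rfl⟩)
    · exact (delEdge_adj.mp (ho.1.1 a b h)).1
    · exact G.mem_edgeSet.mp (hep ▸ G.mem_edgeSet.mpr he)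
  · by_cases hab' : s(a, b) = s(u, v)
    · rcases Sym2.eq_iff.mp (hab'.trans hep.symm) with ⟨rfl, rfl⟩ | ⟨rfl, rfl⟩
      exacts [.inl (.inr ⟨rfl, rfl⟩), .inr (.inr ⟨rfl, rfl⟩)]
    · exact (ho.1.total (delEdge_adj.mpr ⟨hab, hab'⟩)).imp .inl .inl

end Deletion

section Contraction

variable {V : Type*} {G : SimpleGraph V} {u v : V} (hvu : v ≠ u)

open Classical in
noncomputable def contractProj (z : V) : {z : V // z ≠ u} :=
  if h : z = u then ⟨v, hvu⟩ else ⟨z, h⟩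

theorem contractProj_self : contractProj hvu u = ⟨v, hvu⟩ := dif_pos rfl

theorem contractProj_of_ne {z : V} (hz : z ≠ u) : contractProj hvu z = ⟨z, hz⟩ := dif_neg hz

theorem contractProj_val (c : {z : V // z ≠ u}) : contractProj hvu c.1 = c :=
  contractProj_of_ne hvu c.2

theorem contractProj_of_mem {p : V} (hp : p ∈ s(u, v)) : contractProj hvu p = ⟨v, hvu⟩ := by
  rcases Sym2.mem_iff.mp hp with rfl | rfl
  exacts [contractProj_self hvu, contractProj_of_ne hvu hvu]

theorem contractProj_eq_iff {a b : V} :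
    contractProj hvu a = contractProj hvu b ↔ a = b ∨ s(a, b) = s(u, v) := by
  refine ⟨fun h => ?_, ?_⟩
  · by_cases ha : a = u <;> by_cases hb : b = u
    · exact .inl (ha.trans hb.symm)
    · rw [ha, contractProj_self, contractProj_of_ne hvu hb, Subtype.mk.injEq] at h
      exact .inr (by rw [ha, ← h])
    · rw [hb, contractProj_self, contractProj_of_ne hvu ha, Subtype.mk.injEq] at h
      exact .inr (by rw [hb, h, Sym2.eq_swap])
    · rw [contractProj_of_ne hvu ha, contractProj_of_ne hvu hb, Subtype.mk.injEq] at h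
      exact .inl h
  · rintro (rfl | h)
    · rfl
    · rw [contractProj_of_mem hvu (h ▸ Sym2.mem_mk_left a b),
        contractProj_of_mem hvu (h ▸ Sym2.mem_mk_right a b)]

theorem sym2_ne_of_contractProj_ne {a b : V} (h : contractProj hvu a ≠ contractProj hvu b) :
    s(a, b) ≠ s(u, v) :=
  fun hab => h ((contractProj_eq_iff hvu).mpr (.inr hab))

theorem contractProj_ne_of_delEdge_adj {a b : V} (hab : (delEdge G u v).Adj a b) :
    contractProj hvu a ≠ contractProj hvu b := by
  rw [Ne, contractProj_eq_iff, not_or]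
  exact ⟨(delEdge_adj.mp hab).1.ne, (delEdge_adj.mp hab).2⟩

/-- Modelled on `contractEdge`: up to symmetry, `conArc u v G.Adj` is its adjacency. -/
def conArc (u v : V) (r : V → V → Prop) (c d : {z : V // z ≠ u}) : Prop :=
  c ≠ d ∧ (r c d ∨ (c.1 = v ∧ r u d) ∨ (d.1 = v ∧ r c u))

theorem conArc_iff {r : V → V → Prop} {c d : {z : V // z ≠ u}} :
    conArc u v r c d ↔
      c ≠ d ∧ ∃ a b, contractProj hvu a = c ∧ contractProj hvu b = d ∧ r a b := by
  refine and_congr_right fun hcd => ⟨?_, ?_⟩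
  · rintro (h | ⟨hc, h⟩ | ⟨hd, h⟩)
    · exact ⟨c, d, contractProj_val hvu c, contractProj_val hvu d, h⟩
    · exact ⟨u, d, (contractProj_self hvu).trans (Subtype.ext hc.symm),
        contractProj_val hvu d, h⟩
    · exact ⟨c, u, contractProj_val hvu c,
        (contractProj_self hvu).trans (Subtype.ext hd.symm), h⟩
  · rintro ⟨a, b, rfl, rfl, h⟩
    by_cases ha : a = u
    · have hb : b ≠ u := by rintro rfl; exact hcd (by rw [ha])
      rw [ha, contractProj_self, contractProj_of_ne hvu hb]
      exact .inr (.inl ⟨rfl, ha ▸ h⟩)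
    · by_cases hb : b = u
      · rw [hb, contractProj_self, contractProj_of_ne hvu ha]
        exact .inr (.inr ⟨rfl, hb ▸ h⟩)
      · rw [contractProj_of_ne hvu ha, contractProj_of_ne hvu hb]
        exact .inl h

theorem conArc_congr {r₁ r₂ : V → V → Prop}
    (h : ∀ a b, contractProj hvu a ≠ contractProj hvu b → (r₁ a b ↔ r₂ a b)) :
    conArc u v r₁ = conArc u v r₂ := by
  ext c d
  simp only [conArc_iff hvu]
  refine and_congr_right fun hcd => ⟨?_, ?_⟩ <;> rintro ⟨a, b, rfl, rfl, hab⟩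
  exacts [⟨a, b, rfl, rfl, (h a b hcd).mp hab⟩, ⟨a, b, rfl, rfl, (h a b hcd).mpr hab⟩]

theorem conArc_delArc (hvu : v ≠ u) {r : V → V → Prop} :
    conArc u v (delArc u v r) = conArc u v r :=
  conArc_congr hvu fun _ _ hab => ⟨And.left, (⟨·, sym2_ne_of_contractProj_ne hvu hab⟩)⟩

theorem conArc_addArc (hvu : v ≠ u) {r : V → V → Prop} {t w : V} (hep : s(t, w) = s(u, v)) :
    conArc u v (addArc r t w) = conArc u v r := by
  refine conArc_congr hvu fun a b hab => ⟨?_, Or.inl⟩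
  rintro (h | ⟨rfl, rfl⟩)
  exacts [h, absurd ((contractProj_eq_iff hvu).mpr (.inr hep)) hab]

theorem contractEdge_adj_iff {c d : {z : V // z ≠ u}} :
    (contractEdge G u v).Adj c d ↔ c ≠ d ∧
      ∃ a b, contractProj hvu a = c ∧ contractProj hvu b = d ∧ (delEdge G u v).Adj a b := by
  have hcon : (contractEdge G u v).Adj c d ↔ conArc u v G.Adj c d :=
    and_congr_right fun _ =>
      or_congr_right (or_congr_right (and_congr_right fun _ => G.adj_comm _ _))
  rw [hcon, conArc_congr hvu (r₂ := (delEdge G u v).Adj), conArc_iff hvu]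
  exact fun a b hab => ⟨fun h => delEdge_adj.mpr ⟨h, sym2_ne_of_contractProj_ne hvu hab⟩,
    fun h => (delEdge_adj.mp h).1⟩

theorem contractEdge_adj_contractProj {a b : V} (hab : (delEdge G u v).Adj a b) :
    (contractEdge G u v).Adj (contractProj hvu a) (contractProj hvu b) :=
  (contractEdge_adj_iff hvu).mpr ⟨contractProj_ne_of_delEdge_adj hvu hab, a, b, rfl, rfl, hab⟩

theorem reflTransGen_conArc_contractProj {r : V → V → Prop} {a b : V}
    (h : ReflTransGen r a b) :
    ReflTransGen (conArc u v r) (contractProj hvu a) (contractProj hvu b) := by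
  induction h with
  | refl => exact .refl
  | @tail b c _ hbc ih =>
    by_cases hne : contractProj hvu b = contractProj hvu c
    · exact hne ▸ ih
    · exact ih.tail ((conArc_iff hvu).mpr ⟨hne, b, c, rfl, rfl, hbc⟩)

theorem reflTransGen_of_reflTransGen_conArc {r : V → V → Prop} {a : V} {d : {z : V // z ≠ u}}
    (h : ReflTransGen (conArc u v r) (contractProj hvu a) d) (b : V)
    (hb : contractProj hvu b = d) :
    ReflTransGen r a b ∨
      (∃ p ∈ s(u, v), ReflTransGen r a p) ∧ ∃ q ∈ s(u, v), ReflTransGen r q b := by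
  induction h generalizing b with
  | refl =>
    rcases (contractProj_eq_iff hvu).mp hb with rfl | hba
    · exact .inl .refl
    · exact .inr ⟨⟨a, hba ▸ Sym2.mem_mk_right b a, .refl⟩,
        b, hba ▸ Sym2.mem_mk_left b a, .refl⟩
  | tail _ hcd ih =>
    obtain ⟨-, a', b', rfl, rfl, hab'⟩ := (conArc_iff hvu).mp hcd
    rcases (contractProj_eq_iff hvu).mp hb with rfl | hbb
    · exact (ih a' rfl).imp (·.tail hab')
        (And.imp_right fun ⟨q, hq, hqa⟩ => ⟨q, hq, hqa.tail hab'⟩)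
    · refine .inr ⟨(ih a' rfl).elim
        (fun h => ⟨b', hbb ▸ Sym2.mem_mk_right b b', h.tail hab'⟩) And.left,
        b, hbb ▸ Sym2.mem_mk_left b b', .refl⟩

def liftArc (G : SimpleGraph V) (ρ : {z : V // z ≠ u} → {z : V // z ≠ u} → Prop) :
    V → V → Prop :=
  fun a b => (delEdge G u v).Adj a b ∧ ρ (contractProj hvu a) (contractProj hvu b)

variable {ρ : {z : V // z ≠ u} → {z : V // z ≠ u} → Prop} {o : V → V → Prop}

theorem transGen_liftArc {a b : V} (h : TransGen (liftArc hvu G ρ) a b) :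
    TransGen ρ (contractProj hvu a) (contractProj hvu b) :=
  TransGen.lift _ (fun _ _ h => h.2) a b h

theorem isAcyclicOrientation_liftArc (hρ : IsAcyclicOrientation (contractEdge G u v) ρ) :
    IsAcyclicOrientation (delEdge G u v) (liftArc hvu G ρ) :=
  .of_total (fun _ _ h => h.1)
    (fun _ _ hab => (hρ.1.total (contractEdge_adj_contractProj hvu hab)).imp (⟨hab, ·⟩)
      (⟨hab.symm, ·⟩))
    (fun _ h => hρ.2 _ (transGen_liftArc hvu h))

theorem noPathJoining_liftArc (hρ : ∀ c, ¬ TransGen ρ c c) :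
    NoPathJoining (liftArc hvu G ρ) s(u, v) := by
  intro p hp q hq h
  have h' := transGen_liftArc hvu h
  rw [contractProj_of_mem hvu hp, contractProj_of_mem hvu hq] at h'
  exact hρ _ h'

theorem conArc_liftArc (hρ : ∀ c d, ρ c d → (contractEdge G u v).Adj c d) :
    conArc u v (liftArc hvu G ρ) = ρ := by
  ext c d
  rw [conArc_iff hvu]
  refine ⟨fun ⟨_, a, b, hac, hbd, _, h⟩ => hac ▸ hbd ▸ h, fun h => ?_⟩
  obtain ⟨hcd, a, b, rfl, rfl, hab⟩ := (contractEdge_adj_iff hvu).mp (hρ c d h)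
  exact ⟨hcd, a, b, rfl, rfl, hab, h⟩

theorem isAcyclicOrientation_conArc (hvu : v ≠ u) (ho : IsAcyclicOrientation (delEdge G u v) o)
    (hn : NoPathJoining o s(u, v)) :
    IsAcyclicOrientation (contractEdge G u v) (conArc u v o) := by
  refine .of_total (fun c d h => ?_) (fun c d hcd => ?_) (fun c h => ?_)
  · obtain ⟨hcd, a, b, rfl, rfl, hab⟩ := (conArc_iff hvu).mp h
    exact (contractEdge_adj_iff hvu).mpr ⟨hcd, a, b, rfl, rfl, ho.1.1 a b hab⟩
  · obtain ⟨hcd, a, b, rfl, rfl, hab⟩ := (contractEdge_adj_iff hvu).mp hcd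
    exact (ho.1.total hab).imp (fun h => (conArc_iff hvu).mpr ⟨hcd, a, b, rfl, rfl, h⟩)
      (fun h => (conArc_iff hvu).mpr ⟨hcd.symm, b, a, rfl, rfl, h⟩)
  · -- A cycle lifts to a cycle of `o` or to a path of `o` joining the ends of `e`.
    obtain ⟨d, hcd, hdc⟩ := TransGen.head'_iff.mp h
    obtain ⟨-, a, b, rfl, rfl, hab⟩ := (conArc_iff hvu).mp hcd
    rcases reflTransGen_of_reflTransGen_conArc hvu hdc a rfl with
      hba | ⟨⟨p, hp, hbp⟩, q, hq, hqa⟩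
    · exact ho.2 a (TransGen.head' hab hba)
    · exact hn q hq p hp ((TransGen.tail' hqa hab).trans_left hbp)

theorem liftArc_conArc (ho : IsAcyclicOrientation (delEdge G u v) o)
    (hn : NoPathJoining o s(u, v)) : liftArc hvu G (conArc u v o) = o := by
  ext a b
  refine ⟨fun ⟨hab, h⟩ => (ho.1.total hab).resolve_right fun hba => ?_, fun h => ?_⟩
  · exact (isAcyclicOrientation_conArc hvu ho hn).1.asymm h ((conArc_iff hvu).mpr
      ⟨(contractProj_ne_of_delEdge_adj hvu hab).symm, b, a, rfl, rfl, hba⟩)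
  · have hab := ho.1.1 a b h
    exact ⟨hab,
      (conArc_iff hvu).mpr ⟨contractProj_ne_of_delEdge_adj hvu hab, a, b, rfl, rfl, h⟩⟩

end Contraction

section Counting

variable {V : Type*} {G : SimpleGraph V} {u v x t w : V} {r o : V → V → Prop}

open Classical in
noncomputable def canonicalExtension (G : SimpleGraph V) (u v x : V) (o : V → V → Prop) :
    V → V → Prop :=
  if addArc o u v ∈ 𝒪 G x then addArc o u v else addArc o v u

theorem canonicalExtension_of_mem (h : addArc o u v ∈ 𝒪 G x) :
    canonicalExtension G u v x o = addArc o u v :=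
  if_pos h

theorem canonicalExtension_of_not_mem (h : addArc o u v ∉ 𝒪 G x) :
    canonicalExtension G u v x o = addArc o v u :=
  if_neg h

theorem delArc_canonicalExtension (ho : IsOrientation (delEdge G u v) o) :
    delArc u v (canonicalExtension G u v x o) = o := by
  unfold canonicalExtension
  split_ifs
  exacts [delArc_addArc ho rfl, delArc_addArc ho Sym2.eq_swap]

theorem mem_image_canonicalExtension_iff :
    r ∈ canonicalExtension G u v x '' 𝒪 (delEdge G u v) x ↔
      delArc u v r ∈ 𝒪 (delEdge G u v) x ∧
        canonicalExtension G u v x (delArc u v r) = r := by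
  refine ⟨?_, fun h => ⟨_, h⟩⟩
  rintro ⟨o, ho, rfl⟩
  rw [delArc_canonicalExtension ho.1.1]
  exact ⟨ho, rfl⟩

theorem canonicalExtension_mem [Finite V] (he : G.Adj u v) (ho : o ∈ 𝒪 (delEdge G u v) x) :
    canonicalExtension G u v x o ∈ 𝒪 G x := by
  obtain ⟨hoa, hreach⟩ := mem_acyclicOrientationsWithSource_iff.mp ho
  have hmem : ∀ t w, s(t, w) = s(u, v) → ¬ ReflTransGen o w t → addArc o t w ∈ 𝒪 G x :=
    fun t w hep hwt =>
    mem_acyclicOrientationsWithSource_iff.mpr ⟨isAcyclicOrientation_addArc he hoa hep hwt,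
      fun b => ReflTransGen.mono le_addArc _ _ (hreach b)⟩
  by_cases h : addArc o u v ∈ 𝒪 G x
  · rwa [canonicalExtension_of_mem h]
  rw [canonicalExtension_of_not_mem h]
  -- `addArc o u v` can only fail through a path `v ⇝ u` in `o`, which rules out `u ⇝ v`.
  refine hmem v u Sym2.eq_swap fun huv => h (hmem u v rfl fun hvu => ?_)
  exact hoa.2 u (((reflTransGen_iff_eq_or_transGen.mp huv).resolve_left he.ne').trans_left hvu)

theorem addArc_mem_image_canonicalExtension [Finite V] (ho : IsOrientation (delEdge G u v) o)
    (huv : addArc o u v ∈ 𝒪 G x) (hvu : addArc o v u ∈ 𝒪 G x) :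
    addArc o u v ∈ canonicalExtension G u v x '' 𝒪 (delEdge G u v) x := by
  obtain ⟨huva, huvr⟩ := mem_acyclicOrientationsWithSource_iff.mp huv
  have hxv : ReflTransGen o x v :=
    ((mem_acyclicOrientationsWithSource_iff.mp hvu).2 v).of_addArc_tail
  refine ⟨o, mem_acyclicOrientationsWithSource_iff.mpr ⟨?_, fun b => (huvr b).of_addArc hxv⟩,
    canonicalExtension_of_mem huv⟩
  simpa only [delArc_addArc ho rfl] using isAcyclicOrientation_delArc (u := u) (v := v) huva

variable [Finite V]

theorem noPathJoining_delArc (he : G.Adj u v) (hr : r ∈ 𝒪 G x)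
    (hD : r ∉ canonicalExtension G u v x '' 𝒪 (delEdge G u v) x) :
    NoPathJoining (delArc u v r) s(u, v) := by
  obtain ⟨hra, hreach⟩ := mem_acyclicOrientationsWithSource_iff.mp hr
  obtain ⟨t, w, htw, hep⟩ : ∃ t w, r t w ∧ s(t, w) = s(u, v) :=
    (hra.1.total he).elim (fun h => ⟨u, v, h, rfl⟩) (fun h => ⟨v, u, h, Sym2.eq_swap⟩)
  have hoa := isAcyclicOrientation_delArc (u := u) (v := v) hra
  have hr' := addArc_delArc hra.1 htw hep
  generalize delArc u v r = o at hoa hr' ⊢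
  subst hr'
  have hwt : ¬ TransGen o w t := not_transGen_of_acyclic_addArc hra.2
  -- A path `t ⇝ w` in `o` would put `o` in `O(G ∖ e, x)`; since `r` is not the canonical
  -- extension, `addArc o w t` would then lie in `O(G, x)`, yet it closes a cycle with that path.
  refine hep ▸ noPathJoining_mk hoa.2 (fun htw' => ?_) hwt
  have hB : o ∈ 𝒪 (delEdge G u v) x :=
    mem_acyclicOrientationsWithSource_iff.mpr ⟨hoa, fun b =>
      (hreach b).of_addArc ((hreach t).of_addArc_tail.trans htw'.to_reflTransGen)⟩
  have hne : canonicalExtension G u v x o ≠ addArc o t w := fun h => hD <|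
    mem_image_canonicalExtension_iff.mpr (by rw [delArc_addArc hoa.1 hep]; exact ⟨hB, h⟩)
  rcases Sym2.eq_iff.mp hep with ⟨ht, hw⟩ | ⟨ht, hw⟩ <;> subst t w
  · exact hne (canonicalExtension_of_mem hr)
  · by_cases h : addArc o u v ∈ 𝒪 G x
    · exact not_transGen_of_acyclic_addArc (mem_acyclicOrientationsWithSource_iff.mp h).1.2 htw'
    · exact hne (canonicalExtension_of_not_mem h)

theorem conArc_mem (he : G.Adj u v) (hr : r ∈ 𝒪 G x)
    (hD : r ∉ canonicalExtension G u v x '' 𝒪 (delEdge G u v) x) :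
    conArc u v r ∈ 𝒪 (contractEdge G u v) (contractProj he.ne' x) := by
  obtain ⟨hra, hreach⟩ := mem_acyclicOrientationsWithSource_iff.mp hr
  refine mem_acyclicOrientationsWithSource_iff.mpr ⟨?_, fun c => ?_⟩
  · rw [← conArc_delArc he.ne']
    exact isAcyclicOrientation_conArc he.ne' (isAcyclicOrientation_delArc hra)
      (noPathJoining_delArc he hr hD)
  · rw [← contractProj_val he.ne' c]
    exact reflTransGen_conArc_contractProj he.ne' (hreach c)

theorem liftArc_conArc_of_not_mem (he : G.Adj u v) (hr : r ∈ 𝒪 G x)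
    (hD : r ∉ canonicalExtension G u v x '' 𝒪 (delEdge G u v) x) :
    liftArc he.ne' G (conArc u v r) = delArc u v r := by
  rw [← conArc_delArc he.ne', liftArc_conArc he.ne' (isAcyclicOrientation_delArc hr.1)
    (noPathJoining_delArc he hr hD)]

theorem injOn_conArc (he : G.Adj u v) :
    Set.InjOn (conArc u v) (𝒪 G x \ canonicalExtension G u v x '' 𝒪 (delEdge G u v) x) := by
  intro r₁ hr₁ r₂ hr₂ h
  have hdel : delArc u v r₁ = delArc u v r₂ := by
    rw [← liftArc_conArc_of_not_mem he hr₁.1 hr₁.2,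
      ← liftArc_conArc_of_not_mem he hr₂.1 hr₂.2, h]
  have ho := (isAcyclicOrientation_delArc (u := u) (v := v) hr₁.1.1).1
  have hsplit : ∀ r ∈ 𝒪 G x, delArc u v r = delArc u v r₁ →
      r = addArc (delArc u v r₁) u v ∨ r = addArc (delArc u v r₁) v u := fun r hr hro =>
    hro ▸ hr.1.1.eq_addArc_or_eq_addArc he
  generalize hgen : delArc u v r₁ = o at ho hsplit
  rcases hsplit r₁ hr₁.1 hgen with rfl | rfl <;>
    rcases hsplit r₂ hr₂.1 (hdel.symm.trans hgen) with rfl | rfl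
  · rfl
  · exact absurd (addArc_mem_image_canonicalExtension ho hr₁.1 hr₂.1) hr₁.2
  · exact absurd (addArc_mem_image_canonicalExtension ho hr₂.1 hr₁.1) hr₂.2
  · rfl

section Lift

variable {ρ : {z : V // z ≠ u} → {z : V // z ≠ u} → Prop}

theorem reflTransGen_liftArc_cases (he : G.Adj u v)
    (hρ : ρ ∈ 𝒪 (contractEdge G u v) (contractProj he.ne' x)) (b : V) :
    ReflTransGen (liftArc he.ne' G ρ) x b ∨
      (∃ p ∈ s(u, v), ReflTransGen (liftArc he.ne' G ρ) x p) ∧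
        ∃ q ∈ s(u, v), ReflTransGen (liftArc he.ne' G ρ) q b := by
  obtain ⟨hρa, hreach⟩ := mem_acyclicOrientationsWithSource_iff.mp hρ
  have h := hreach (contractProj he.ne' b)
  rw [← conArc_liftArc he.ne' hρa.1.1] at h
  exact reflTransGen_of_reflTransGen_conArc he.ne' h b rfl

theorem addArc_liftArc_mem (he : G.Adj u v)
    (hρ : ρ ∈ 𝒪 (contractEdge G u v) (contractProj he.ne' x))
    (hep : s(t, w) = s(u, v)) (ht : ReflTransGen (liftArc he.ne' G ρ) x t) :
    addArc (liftArc he.ne' G ρ) t w ∈ 𝒪 G x := by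
  have hρa := (mem_acyclicOrientationsWithSource_iff.mp hρ).1
  have hn := noPathJoining_liftArc he.ne' (G := G) hρa.2
  rw [← hep] at hn
  refine mem_acyclicOrientationsWithSource_iff.mpr
    ⟨isAcyclicOrientation_addArc he (isAcyclicOrientation_liftArc he.ne' hρa) hep ?_,
      fun b => ?_⟩
  · intro hwt
    rcases reflTransGen_iff_eq_or_transGen.mp hwt with h | h
    exacts [ne_of_sym2_eq he hep h, hn w (Sym2.mem_mk_right t w) t (Sym2.mem_mk_left t w) h]
  · have hxt : ReflTransGen (addArc _ t w) x t := ReflTransGen.mono le_addArc _ _ ht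
    rcases reflTransGen_liftArc_cases he hρ b with h | ⟨-, q, hq, hqb⟩
    · exact ReflTransGen.mono le_addArc _ _ h
    · refine ReflTransGen.trans ?_ (ReflTransGen.mono le_addArc _ _ hqb)
      rcases Sym2.mem_iff.mp (hep ▸ hq) with rfl | rfl
      exacts [hxt, hxt.tail (.inr ⟨rfl, rfl⟩)]

theorem exists_reflTransGen_liftArc (he : G.Adj u v)
    (hρ : ρ ∈ 𝒪 (contractEdge G u v) (contractProj he.ne' x)) :
    ∃ p ∈ s(u, v), ReflTransGen (liftArc he.ne' G ρ) x p :=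
  (reflTransGen_liftArc_cases he hρ v).elim (⟨v, Sym2.mem_mk_right u v, ·⟩) And.left

end Lift

theorem image_conArc (he : G.Adj u v) :
    conArc u v '' (𝒪 G x \ canonicalExtension G u v x '' 𝒪 (delEdge G u v) x) =
      𝒪 (contractEdge G u v) (contractProj he.ne' x) := by
  refine Set.Subset.antisymm (Set.image_subset_iff.mpr fun r hr => conArc_mem he hr.1 hr.2)
    fun ρ hρ => ?_
  have hρa := (mem_acyclicOrientationsWithSource_iff.mp hρ).1
  set L := liftArc he.ne' G ρ
  have hL := (isAcyclicOrientation_liftArc he.ne' hρa).1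
  have hcon : ∀ {t w}, s(t, w) = s(u, v) → conArc u v (addArc L t w) = ρ := fun hep =>
    (conArc_addArc he.ne' hep).trans (conArc_liftArc he.ne' hρa.1.1)
  rw [Set.mem_image]
  by_cases hu : ReflTransGen L x u <;> by_cases hv : ReflTransGen L x v
  · refine ⟨addArc L v u, ⟨addArc_liftArc_mem he hρ Sym2.eq_swap hv, ?_⟩,
      hcon Sym2.eq_swap⟩
    rw [mem_image_canonicalExtension_iff, delArc_addArc hL Sym2.eq_swap,
      canonicalExtension_of_mem (addArc_liftArc_mem he hρ rfl hu)]
    rintro ⟨-, h⟩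
    rcases (congrFun₂ h u v).mp (.inr ⟨rfl, rfl⟩) with h | ⟨h, -⟩
    exacts [(delEdge_adj.mp h.1).2 rfl, he.ne h]
  · refine ⟨addArc L u v, ⟨addArc_liftArc_mem he hρ rfl hu, ?_⟩, hcon rfl⟩
    rw [mem_image_canonicalExtension_iff, delArc_addArc hL rfl]
    exact fun h => hv ((mem_acyclicOrientationsWithSource_iff.mp h.1).2 v)
  · refine ⟨addArc L v u, ⟨addArc_liftArc_mem he hρ Sym2.eq_swap hv, ?_⟩,
      hcon Sym2.eq_swap⟩
    rw [mem_image_canonicalExtension_iff, delArc_addArc hL Sym2.eq_swap]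
    exact fun h => hu ((mem_acyclicOrientationsWithSource_iff.mp h.1).2 u)
  · obtain ⟨p, hp, hxp⟩ := exists_reflTransGen_liftArc he hρ
    rcases Sym2.mem_iff.mp hp with rfl | rfl
    exacts [(hu hxp).elim, (hv hxp).elim]

theorem card_acyclicOrientationsWithSource_eq_add (he : G.Adj u v) (x : V) :
    Nat.card (𝒪 G x) = Nat.card (𝒪 (delEdge G u v) x) +
      Nat.card (𝒪 (contractEdge G u v) (contractProj he.ne' x)) := by
  have hsub : canonicalExtension G u v x '' 𝒪 (delEdge G u v) x ⊆ 𝒪 G x :=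
    Set.image_subset_iff.mpr fun o ho => canonicalExtension_mem he ho
  have hinj : Set.InjOn (canonicalExtension G u v x) (𝒪 (delEdge G u v) x) :=
    Set.LeftInvOn.injOn (f₁' := delArc u v) fun o ho => delArc_canonicalExtension ho.1.1
  simp only [Nat.card_coe_set_eq]
  rw [← Set.ncard_sdiff_add_ncard_of_subset hsub, hinj.ncard_image, ← image_conArc he,
    (injOn_conArc he).ncard_image, add_comm]

end Counting

section Independence

variable {V : Type*} [Finite V] {G : SimpleGraph V} {u v : V}

theorem ncard_edgeSet_delEdge_lt (he : G.Adj u v) :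
    (delEdge G u v).edgeSet.ncard < G.edgeSet.ncard := by
  rw [delEdge, SimpleGraph.edgeSet_deleteEdges]
  exact Set.ncard_sdiff_singleton_lt_of_mem (G.mem_edgeSet.mpr he)

theorem ncard_edgeSet_contractEdge_le (hvu : v ≠ u) :
    (contractEdge G u v).edgeSet.ncard ≤ (delEdge G u v).edgeSet.ncard := by
  refine (Set.ncard_le_ncard ?_).trans (Set.ncard_image_le (f := Sym2.map (contractProj hvu)))
  refine Sym2.ind fun c d hcd => ?_
  obtain ⟨-, a, b, rfl, rfl, hab⟩ := (contractEdge_adj_iff hvu).mp hcd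
  exact ⟨s(a, b), hab, rfl⟩

theorem card_acyclicOrientationsWithSource_eq_card (G : SimpleGraph V) (x y : V) :
    Nat.card (𝒪 G x) = Nat.card (𝒪 G y) := by
  induction hn : G.edgeSet.ncard using Nat.strong_induction_on generalizing V with
  | _ n ih =>
  by_cases hG : ∃ u v, G.Adj u v
  · obtain ⟨u, v, he⟩ := hG
    have hdel := hn ▸ ncard_edgeSet_delEdge_lt he
    have hcon := (ncard_edgeSet_contractEdge_le he.ne').trans_lt hdel
    rw [card_acyclicOrientationsWithSource_eq_add he x,
      card_acyclicOrientationsWithSource_eq_add he y,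
      ih _ hdel (delEdge G u v) x y rfl, ih _ hcon (contractEdge G u v) _ _ rfl]
  · simp only [not_exists] at hG
    rw [acyclicOrientationsWithSource_eq_of_forall_not_adj hG x y]

end Independence

section Colorings

variable {V α : Type*} {G : SimpleGraph V} {u v : V}

abbrev IsProperColoring (G : SimpleGraph V) (f : V → α) : Prop :=
  ∀ a b, G.Adj a b → f a ≠ f b

theorem isProperColoring_delEdge_and_ne_iff (he : G.Adj u v) {f : V → α} :
    IsProperColoring (delEdge G u v) f ∧ f u ≠ f v ↔ IsProperColoring G f := by
  refine ⟨fun ⟨hf, huv⟩ a b hab => ?_,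
    fun hf => ⟨fun a b hab => hf a b (delEdge_adj.mp hab).1, hf u v he⟩⟩
  by_cases hep : s(a, b) = s(u, v)
  · rcases Sym2.eq_iff.mp hep with ⟨rfl, rfl⟩ | ⟨rfl, rfl⟩
    exacts [huv, huv.symm]
  · exact hf a b (delEdge_adj.mpr ⟨hab, hep⟩)

theorem apply_val_contractProj {f : V → α} (hvu : v ≠ u) (huv : f u = f v) (z : V) :
    f (contractProj hvu z).1 = f z := by
  by_cases hz : z = u
  · rw [hz, contractProj_self, huv]
  · rw [contractProj_of_ne hvu hz]

noncomputable def contractEdgeColoringEquiv (hvu : v ≠ u) :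
    {f : V → α // IsProperColoring (delEdge G u v) f ∧ ¬ f u ≠ f v} ≃
      {g : {z : V // z ≠ u} → α // IsProperColoring (contractEdge G u v) g} where
  toFun f := ⟨fun z => f.1 z, fun c d hcd => by
    obtain ⟨-, a, b, rfl, rfl, hab⟩ := (contractEdge_adj_iff hvu).mp hcd
    have huv := not_not.mp f.2.2
    dsimp only
    rw [apply_val_contractProj hvu huv, apply_val_contractProj hvu huv]
    exact f.2.1 a b hab⟩
  invFun g := ⟨fun z => g.1 (contractProj hvu z),
    fun a b hab => g.2 _ _ (contractEdge_adj_contractProj hvu hab),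
    not_not.mpr (by dsimp only; rw [contractProj_self, contractProj_of_ne hvu hvu])⟩
  left_inv f := Subtype.ext (funext (apply_val_contractProj hvu (not_not.mp f.2.2)))
  right_inv g := Subtype.ext (funext fun c => congrArg g.1 (contractProj_val hvu c))

theorem card_isProperColoring_delEdge [Finite V] [Finite α] (he : G.Adj u v) :
    Nat.card {f : V → α // IsProperColoring (delEdge G u v) f} =
      Nat.card {f : V → α // IsProperColoring G f} +
        Nat.card {g : {z : V // z ≠ u} → α // IsProperColoring (contractEdge G u v) g} := by
  classical
  rw [← Nat.card_congr (Equiv.sumCompl fun f : {f : V → α // _} => f.1 u ≠ f.1 v),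
    Nat.card_sum]
  congr 1
  · exact Nat.card_congr ((Equiv.subtypeSubtypeEquivSubtypeInter _ _).trans
      (Equiv.subtypeEquivRight fun _ => isProperColoring_delEdge_and_ne_iff he))
  · exact Nat.card_congr ((Equiv.subtypeSubtypeEquivSubtypeInter _ _).trans
      (contractEdgeColoringEquiv he.ne'))

end Colorings

/-- Deletion–contraction: for a finite simple graph `G` with an edge `e = {u, v}`,
the number `φ̃` of acyclic orientations with a unique fixed source satisfies
`φ̃(G) = φ̃(G∖e) + φ̃(G/e)` (these numbers do not depend on the chosen sources),
and the chromatic polynomial satisfies `P(G) = P(G∖e) − P(G/e)`. -/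
theorem deletion_contraction {V : Type*} [Fintype V] (G : SimpleGraph V)
    (u v : V) (he : G.Adj u v) :
    (∀ (x : V) (xd : V) (xc : {z : V // z ≠ u}),
        Nat.card (acyclicOrientationsWithSource G x)
          = Nat.card (acyclicOrientationsWithSource (delEdge G u v) xd)
            + Nat.card (acyclicOrientationsWithSource (contractEdge G u v) xc))
    ∧ (∀ P Pd Pc : Polynomial ℤ,
        (∀ q : ℕ, P.eval (q : ℤ)
          = Nat.card {f : V → Fin q // ∀ a b : V, G.Adj a b → f a ≠ f b}) →
        (∀ q : ℕ, Pd.eval (q : ℤ)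
          = Nat.card {f : V → Fin q // ∀ a b : V, (delEdge G u v).Adj a b → f a ≠ f b}) →
        (∀ q : ℕ, Pc.eval (q : ℤ)
          = Nat.card {f : {z : V // z ≠ u} → Fin q //
              ∀ a b, (contractEdge G u v).Adj a b → f a ≠ f b}) →
        P = Pd - Pc) := by
  refine ⟨fun x xd xc => ?_, fun P Pd Pc hP hPd hPc => ?_⟩
  · rw [card_acyclicOrientationsWithSource_eq_add he x,
      card_acyclicOrientationsWithSource_eq_card (delEdge G u v) x xd,
      card_acyclicOrientationsWithSource_eq_card (contractEdge G u v) _ xc]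
  · refine Polynomial.eq_of_infinite_eval_eq _ _
      (Set.infinite_of_injective_forall_mem Nat.cast_injective fun q : ℕ => ?_)
    simp only [Set.mem_ofPred_eq, Polynomial.eval_sub, hP, hPd, hPc,
      card_isProperColoring_delEdge he]
    push_cast
    ring
end
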